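/- Let B be any linear operator on ℋ. Then for every ψ₀ ∈ S(ℋ), the time average of t ↦ ⟨ψ_t|B|ψ_t⟩ exists and equals M_{ψ₀B}, i.e., lim_{T→∞} (1/T)∫₀^T ⟨ψ_t|B|ψ_t⟩ dt = M_{ψ₀B}; and for every macro state μ, M_{μB} = ∫_{S(ℋ_μ)} M_{ψ₀B} u_μ(dψ₀), i.e., M_{μB} is the average of M_{ψ₀B} over ψ₀ distributed according to the normalized uniform measure u_μ on S(ℋ_μ). -/

import Mathlib

open Matrix MeasureTheory ProbabilityTheory Filter Finset
open scoped ComplexOrder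

noncomputable section

namespace GNT

variable {D : ℕ}

instance : MeasurableSpace (EuclideanSpace ℂ (Fin D)) :=
  MeasurableSpace.comap (WithLp.equiv 2 (Fin D → ℂ)) MeasurableSpace.pi

/-- outer product `|v⟩⟨v|` -/
def outer (v : EuclideanSpace ℂ (Fin D)) : Matrix (Fin D) (Fin D) ℂ :=
  Matrix.of fun i j => v i * (starRingEnd ℂ) (v j)

/-- `⟨ψ|B|ψ⟩` -/
def sandwich (B : Matrix (Fin D) (Fin D) ℂ) (ψ : EuclideanSpace ℂ (Fin D)) : ℂ :=
  ∑ j, (starRingEnd ℂ) (ψ j) * B.mulVec (fun k => ψ k) j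

/-- `ψ_t = e^{-iHt} ψ` -/
def timeEvol (H : Matrix (Fin D) (Fin D) ℂ) (t : ℝ) (ψ : EuclideanSpace ℂ (Fin D)) :
    EuclideanSpace ℂ (Fin D) :=
  (WithLp.equiv 2 (Fin D → ℂ)).symm
    ((NormedSpace.exp ((-(Complex.I * (t : ℂ))) • H)).mulVec fun k => ψ k)

/-- the eigenprojection `Π_e` of a Hermitian matrix -/
def eigProj (H : Matrix (Fin D) (Fin D) ℂ) (hH : H.IsHermitian) (e : ℝ) :
    Matrix (Fin D) (Fin D) ℂ :=
  ∑ n : Fin D, if hH.eigenvalues n = e then outer (hH.eigenvectorBasis n) else 0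

/-- the set `ℰ` of distinct eigenvalues -/
def eigSet (H : Matrix (Fin D) (Fin D) ℂ) (hH : H.IsHermitian) : Finset ℝ :=
  Finset.univ.image hH.eigenvalues

/-- `M_{μB} = (1/d_μ) ∑_e tr(P_μ Π_e B Π_e)` -/
def MmuB (H : Matrix (Fin D) (Fin D) ℂ) (hH : H.IsHermitian)
    (Pmu B : Matrix (Fin D) (Fin D) ℂ) (dmu : ℕ) : ℂ :=
  (dmu : ℂ)⁻¹ * ∑ e ∈ eigSet H hH, (Pmu * eigProj H hH e * B * eigProj H hH e).trace

/-- `M_{ψB} = ∑_e tr(|ψ⟩⟨ψ| Π_e B Π_e)` -/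
def MpsiB (H : Matrix (Fin D) (Fin D) ℂ) (hH : H.IsHermitian)
    (ψ : EuclideanSpace ℂ (Fin D)) (B : Matrix (Fin D) (Fin D) ℂ) : ℂ :=
  ∑ e ∈ eigSet H hH, (outer ψ * eigProj H hH e * B * eigProj H hH e).trace

/-- `M_{μB}` for a possibly non-Hermitian argument (junk value otherwise) -/
def MmuBd (H Pmu B : Matrix (Fin D) (Fin D) ℂ) (dmu : ℕ) : ℂ :=
  if hH : H.IsHermitian then MmuB H hH Pmu B dmu else 0

/-- `M_{μν}` as a real number -/
def Mmunud (H Pmu Pnu : Matrix (Fin D) (Fin D) ℂ) (dmu : ℕ) : ℝ :=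
  (MmuBd H Pmu Pnu dmu).re

/-- `M_{ψν}` as a real number -/
def MpsiNud (H : Matrix (Fin D) (Fin D) ℂ) (ψ : EuclideanSpace ℂ (Fin D))
    (Pnu : Matrix (Fin D) (Fin D) ℂ) : ℝ :=
  if hH : H.IsHermitian then (MpsiB H hH ψ Pnu).re else 0

/-- maximal degeneracy `D_E` of an eigenvalue -/
def DE (H : Matrix (Fin D) (Fin D) ℂ) (hH : H.IsHermitian) : ℕ :=
  Finset.univ.sup fun n : Fin D =>
    (Finset.univ.filter fun m : Fin D => hH.eigenvalues m = hH.eigenvalues n).card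

/-- maximal number `G(κ)` of eigenvalue gaps in an interval of length `κ` -/
def Gkappa (E : Finset ℝ) (κ : ℝ) : ℕ :=
  sSup {k : ℕ | ∃ x : ℝ, k =
    ((E ×ˢ E).filter fun p => p.1 ≠ p.2 ∧ x ≤ p.1 - p.2 ∧ p.1 - p.2 < x + κ).card}

/-- maximal gap degeneracy `D_G = lim_{κ→0⁺} G(κ)` -/
def DG (E : Finset ℝ) : ℕ :=
  sInf {k : ℕ | ∃ κ : ℝ, 0 < κ ∧ k = Gkappa E κ}

/-- ℓ²→ℓ² operator norm of a complex matrix -/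
def opNorm (B : Matrix (Fin D) (Fin D) ℂ) : ℝ :=
  ‖Matrix.toEuclideanCLM (𝕜 := ℂ) B‖

/-- ℓ²→ℓ² operator norm of a real matrix -/
def opNormR (B : Matrix (Fin D) (Fin D) ℝ) : ℝ :=
  ‖Matrix.toEuclideanCLM (𝕜 := ℝ) B‖

/-- `tr |B|` where `|B| = (B^*B)^{1/2}` -/
def traceAbs (B : Matrix (Fin D) (Fin D) ℂ) : ℝ :=
  (((Matrix.isHermitian_conjTranspose_mul_self B).eigenvectorUnitary : Matrix (Fin D) (Fin D) ℂ) *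
    Matrix.diagonal ((fun x : ℝ => (x : ℂ)) ∘ Real.sqrt ∘ (Matrix.isHermitian_conjTranspose_mul_self B).eigenvalues) *
    (star (Matrix.isHermitian_conjTranspose_mul_self B).eigenvectorUnitary :
      Matrix (Fin D) (Fin D) ℂ)).trace.re

/-- `tr(B⁺)` -/
def trPos (B : Matrix (Fin D) (Fin D) ℂ) : ℝ :=
  if hB : B.IsHermitian then ∑ n : Fin D, max (hB.eigenvalues n) 0 else 0

/-- `tr(B⁻)` -/
def trNeg (B : Matrix (Fin D) (Fin D) ℂ) : ℝ :=
  if hB : B.IsHermitian then ∑ n : Fin D, max (-hB.eigenvalues n) 0 else 0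

/-- `b⁺_min`, smallest eigenvalue of `B⁺` -/
def bPosMin (B : Matrix (Fin D) (Fin D) ℂ) : ℝ :=
  if hB : B.IsHermitian then sInf (Set.range fun n : Fin D => max (hB.eigenvalues n) 0) else 0

/-- `b⁺_max`, largest eigenvalue of `B⁺` -/
def bPosMax (B : Matrix (Fin D) (Fin D) ℂ) : ℝ :=
  if hB : B.IsHermitian then sSup (Set.range fun n : Fin D => max (hB.eigenvalues n) 0) else 0

/-- `b⁻_min`, smallest eigenvalue of `B⁻` -/
def bNegMin (B : Matrix (Fin D) (Fin D) ℂ) : ℝ :=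
  if hB : B.IsHermitian then sInf (Set.range fun n : Fin D => max (-hB.eigenvalues n) 0) else 0

/-- `b⁻_max`, largest eigenvalue of `B⁻` -/
def bNegMax (B : Matrix (Fin D) (Fin D) ℂ) : ℝ :=
  if hB : B.IsHermitian then sSup (Set.range fun n : Fin D => max (-hB.eigenvalues n) 0) else 0

/-- the coordinate projection matrix associated with a set of standard basis vectors -/
def projMat (I : Finset (Fin D)) : Matrix (Fin D) (Fin D) ℂ :=
  Matrix.diagonal fun j => if j ∈ I then 1 else 0

/-- a family of index sets forms a partition of the coordinates -/
def IsPartition {ι : Type*} (Iset : ι → Finset (Fin D)) : Prop :=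
  ∀ j : Fin D, ∃! ν, j ∈ Iset ν

/-- an orthogonal decomposition `ℋ = ⊕_ν ℋ_ν` given by projections `P ν` with `dim ℋ_ν = d ν` -/
def IsOrthDecomp {ι : Type*} [Fintype ι] (P : ι → Matrix (Fin D) (Fin D) ℂ) (d : ι → ℕ) : Prop :=
  (∀ ν, (P ν).IsHermitian) ∧ (∀ ν, P ν * P ν = P ν) ∧
  (∀ μ ν, μ ≠ ν → P μ * P ν = 0) ∧ (∑ ν, P ν = 1) ∧ (∀ ν, (P ν).trace = (d ν : ℂ))

/-- the unit sphere of the range of `P`, as a subset of `ℂ^D` -/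
def sphereOf (Pmu : Matrix (Fin D) (Fin D) ℂ) : Set (EuclideanSpace ℂ (Fin D)) :=
  {ψ | ‖ψ‖ = 1 ∧ ∀ j, Pmu.mulVec (fun k => ψ k) j = ψ j}

/-- `u` is the normalized uniform measure on the unit sphere of the range of `Pmu`:
a probability measure carried by that sphere and invariant under every unitary
commuting with `Pmu`. -/
def IsUniformOn (Pmu : Matrix (Fin D) (Fin D) ℂ)
    (u : Measure (EuclideanSpace ℂ (Fin D))) : Prop :=
  IsProbabilityMeasure u ∧ u (sphereOf Pmu) = 1 ∧
  ∀ U ∈ Matrix.unitaryGroup (Fin D) ℂ,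
    (U : Matrix (Fin D) (Fin D) ℂ) * Pmu = Pmu * (U : Matrix (Fin D) (Fin D) ℂ) →
    Measure.map (fun ψ : EuclideanSpace ℂ (Fin D) =>
      (WithLp.equiv 2 (Fin D → ℂ)).symm
        ((U : Matrix (Fin D) (Fin D) ℂ).mulVec fun k => ψ k)) u = u

/-- `(1-δ)`-most `t ∈ [0,T]` belong to `s` -/
def MostIcc (δ T : ℝ) (s : Set ℝ) : Prop :=
  ENNReal.ofReal ((1 - δ) * T) ≤ volume (s ∩ Set.Icc 0 T)

/-- `(1-δ)`-most `t ∈ [0,∞)` belong to `s` -/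
def MostInfty (δ : ℝ) (s : Set ℝ) : Prop :=
  (1 - δ) ≤ liminf (fun T : ℝ => (volume (s ∩ Set.Icc 0 T)).toReal / T) atTop

/-- `w_{μB}(t) = (1/d_μ) tr(P_μ e^{iHt} B e^{-iHt})` -/
def wmuB (H B Pmu : Matrix (Fin D) (Fin D) ℂ) (dmu : ℕ) (t : ℝ) : ℂ :=
  (dmu : ℂ)⁻¹ * (Pmu * NormedSpace.exp ((Complex.I * (t : ℂ)) • H) * B *
    NormedSpace.exp ((-(Complex.I * (t : ℂ))) • H)).trace

/-- norm of restriction of coordinates: `‖v_I‖` -/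
def pnorm (v : Fin D → ℂ) (I : Finset (Fin D)) : ℝ :=
  Real.sqrt (∑ j ∈ I, ‖v j‖ ^ 2)

/-- `v` is an eigenvector of `H` -/
def IsEigenvector (H : Matrix (Fin D) (Fin D) ℂ) (v : Fin D → ℂ) : Prop :=
  v ≠ 0 ∧ ∃ c : ℂ, H.mulVec v = c • v

/-- `C_{H₀} = D^{-1/2} max{‖Re H₀‖, ‖Im H₀‖}` -/
def CH0 (H0 : Matrix (Fin D) (Fin D) ℂ) : ℝ :=
  (Real.sqrt D)⁻¹ * max (opNormR (Matrix.of fun i j => (H0 i j).re))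
    (opNormR (Matrix.of fun i j => (H0 i j).im))

/-- `σ₋ = min_{i,j} σ_ij` -/
def sigMin (σ : Fin D → Fin D → ℝ) : ℝ := sInf (Set.range fun p : Fin D × Fin D => σ p.1 p.2)

/-- `σ₊ = max_{i,j} σ_ij` -/
def sigMax (σ : Fin D → Fin D → ℝ) : ℝ := sSup (Set.range fun p : Fin D × Fin D => σ p.1 p.2)

/-- the random Gaussian perturbation `V = (A+A^*)/√2` -/
def VofA (Aw : Matrix (Fin D) (Fin D) ℂ) : Matrix (Fin D) (Fin D) ℂ :=
  ((Real.sqrt 2 : ℂ))⁻¹ • (Aw + Awᴴ)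

/-- Assumption A: the entries of `A` are independent centered Gaussians with
variances `σ_ij²/2` for real and imaginary parts, and `σ` is symmetric and positive. -/
def AssumpA {Ω : Type*} [MeasurableSpace Ω] (P : Measure Ω)
    (A : Ω → Matrix (Fin D) (Fin D) ℂ) (σ : Fin D → Fin D → ℝ) : Prop :=
  (∀ i j, 0 < σ i j) ∧ (∀ i j, σ i j = σ j i) ∧
  iIndepFun
    (fun x : (Fin D × Fin D) ⊕ (Fin D × Fin D) =>
      Sum.elim (fun p (ω : Ω) => (A ω p.1 p.2).re) (fun p ω => (A ω p.1 p.2).im) x) P ∧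
  (∀ i j, Measure.map (fun ω => (A ω i j).re) P = gaussianReal 0 (Real.toNNReal (σ i j ^ 2 / 2))) ∧
  (∀ i j, Measure.map (fun ω => (A ω i j).im) P = gaussianReal 0 (Real.toNNReal (σ i j ^ 2 / 2)))

/-- Assumption B: the entries `(Re h_ij)_{i≤j}` and `(Im h_ij)_{i<j}` of the random
Hermitian matrix `H` are mutually independent and continuously distributed, and the
densities of the real parts are bounded by `K`. -/
def AssumpB {Ω : Type*} [MeasurableSpace Ω] (P : Measure Ω)
    (H : Ω → Matrix (Fin D) (Fin D) ℂ) (K : ℝ) : Prop :=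
  (∀ ω, (H ω).IsHermitian) ∧
  iIndepFun
    (fun x : ({p : Fin D × Fin D // p.1 ≤ p.2} ⊕ {p : Fin D × Fin D // p.1 < p.2}) =>
      Sum.elim (fun p (ω : Ω) => (H ω p.1.1 p.1.2).re)
        (fun p ω => (H ω p.1.1 p.1.2).im) x) P ∧
  (∀ i j : Fin D, i ≤ j → Measure.map (fun ω => (H ω i j).re) P ≪ volume) ∧
  (∀ i j : Fin D, i < j → Measure.map (fun ω => (H ω i j).im) P ≪ volume) ∧
  (∀ i j : Fin D, i ≤ j →
    Measure.map (fun ω => (H ω i j).re) P ≤ ENNReal.ofReal K • volume)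

/-- the set of distinct eigenvalues, junk value `∅` for non-Hermitian matrices -/
def eigSetd (H : Matrix (Fin D) (Fin D) ℂ) : Finset ℝ :=
  if hH : H.IsHermitian then eigSet H hH else ∅

/-- `M_{ψB}` for a possibly non-Hermitian matrix (junk value otherwise) -/
def MpsiBd (H : Matrix (Fin D) (Fin D) ℂ) (ψ : EuclideanSpace ℂ (Fin D))
    (B : Matrix (Fin D) (Fin D) ℂ) : ℂ :=
  if hH : H.IsHermitian then MpsiB H hH ψ B else 0

end GNT

/-!
Expanding `e^{-iHt} = ∑_e e^{-iet} Π_e` gives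
`⟨ψ_t|B|ψ_t⟩ = ∑_{e,f} e^{i(e-f)t} tr(|ψ₀⟩⟨ψ₀| Π_e B Π_f)`, and the time average of `e^{iωt}`
tends to `1` if `ω = 0` and to `0` otherwise, so only the diagonal terms `e = f` survive.

For the second claim, `∫ M_{ψB} u(dψ) = tr(ρ K)` with `ρ = ∫ |ψ⟩⟨ψ| u(dψ)` and
`K = ∑_e Π_e B Π_e`. The matrix `ρ` is supported on `ℋ_μ` and commutes with every unitary that
commutes with `P_μ`; among these are the Householder reflections in vectors of `ℋ_μ`, which forces
every vector of `ℋ_μ` to be an eigenvector of `ρ`. Hence `ρ` is a multiple of `P_μ`, and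
`tr ρ = 1` gives `ρ = P_μ / d_μ`.
-/

namespace GNT

open Complex Topology

section Householder

variable {n : Type*} [Fintype n] [DecidableEq n]

def householder (w : n → ℂ) : Matrix n n ℂ :=
  1 - (2 / (star w ⬝ᵥ w)) • vecMulVec w (star w)

lemma star_householder (w : n → ℂ) : star (householder w) = householder w := by
  simp only [householder, star_sub, star_one, star_smul, star_div₀, star_ofNat,
    ← star_dotProduct w w, star_eq_conjTranspose, conjTranspose_vecMulVec, star_star]

lemma householder_mul_self (w : n → ℂ) : householder w * householder w = 1 := by
  simp only [householder, sub_mul, mul_sub, one_mul, mul_one, smul_mul_smul_comm,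
    vecMulVec_mul_vecMulVec, vecMulVec_smul, smul_smul]
  match_scalars
  · simp
  · field_simp
    ring

lemma householder_mem_unitaryGroup (w : n → ℂ) : householder w ∈ unitaryGroup n ℂ := by
  rw [mem_unitaryGroup_iff, star_householder, householder_mul_self]

lemma householder_mul_comm {P : Matrix n n ℂ} (hP : P.IsHermitian) {w : n → ℂ}
    (hw : P *ᵥ w = w) : householder w * P = P * householder w := by
  have hwP : star w ᵥ* P = star w := by rw [← hP.eq, ← star_mulVec, hw]
  simp only [householder, sub_mul, mul_sub, one_mul, mul_one, Matrix.smul_mul, Matrix.mul_smul,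
    vecMulVec_mul, mul_vecMulVec, hw, hwP]

lemma exists_mulVec_eq_smul_of_householder_conj {M : Matrix n n ℂ} {w : n → ℂ}
    (h : householder w * M * star (householder w) = M) : ∃ c : ℂ, M *ᵥ w = c • w := by
  rcases eq_or_ne w 0 with rfl | hw
  · exact ⟨0, by simp⟩
  have hr : star w ⬝ᵥ w ≠ 0 := dotProduct_star_self_eq_zero.not.mpr hw
  rw [star_householder] at h
  have hcomm : householder w * M = M * householder w := by
    conv_rhs => rw [← h, Matrix.mul_assoc, householder_mul_self, Matrix.mul_one]
  have hQ : vecMulVec w (star w) * M = M * vecMulVec w (star w) := by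
    simpa [householder, sub_mul, mul_sub, hr] using hcomm
  have hQw := congrArg (· *ᵥ w) hQ
  simp only [← mulVec_mulVec, vecMulVec_mulVec, mulVec_smul, op_smul_eq_smul] at hQw
  refine ⟨(star w ⬝ᵥ (M *ᵥ w)) / (star w ⬝ᵥ w), ?_⟩
  rw [div_eq_inv_mul, mul_smul, hQw, smul_smul, inv_mul_cancel₀ hr, one_smul]

lemma exists_eq_smul_of_forall_mulVec_eq_smul {P M : Matrix n n ℂ} (hPP : P * P = P)
    (hPM : P * M = M) (hMP : M * P = M)
    (h : ∀ w, P *ᵥ w = w → ∃ c : ℂ, M *ᵥ w = c • w) : ∃ a : ℂ, M = a • P := by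
  set W := LinearMap.eqLocus (toLin' P) LinearMap.id
  have hW : ∀ w ∈ W, toLin' M w ∈ W := fun w _ => by
    simp [W, LinearMap.mem_eqLocus, mulVec_mulVec, hPM]
  obtain ⟨a, ha⟩ := LinearMap.exists_eq_smul_id_of_forall_notLinearIndependent
    (f := (toLin' M).restrict hW) fun w hli => by
      obtain ⟨c, hc⟩ := h w w.2
      exact absurd (LinearIndependent.pair_iff.mp hli c (-1) (by ext1; simp [hc])).2
        (by norm_num)
  refine ⟨a, toLin'.injective (LinearMap.ext fun x => ?_)⟩
  have hx : P *ᵥ x ∈ W := by simp [W, LinearMap.mem_eqLocus, mulVec_mulVec, hPP]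
  simpa [mulVec_mulVec, hMP, smul_mulVec] using
    congrArg Subtype.val (LinearMap.congr_fun ha ⟨P *ᵥ x, hx⟩)

lemma exists_eq_smul_of_forall_unitary_conj_eq {P M : Matrix n n ℂ} (hP : P.IsHermitian)
    (hPP : P * P = P) (hPM : P * M = M) (hMP : M * P = M)
    (hinv : ∀ U ∈ unitaryGroup n ℂ, U * P = P * U → U * M * star U = M) :
    ∃ a : ℂ, M = a • P :=
  exists_eq_smul_of_forall_mulVec_eq_smul hPP hPM hMP fun w hw =>
    exists_mulVec_eq_smul_of_householder_conj
      (hinv _ (householder_mem_unitaryGroup w) (householder_mul_comm hP hw))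

end Householder

section Outer

variable {D : ℕ}

lemma outer_eq_vecMulVec (ψ : EuclideanSpace ℂ (Fin D)) : outer ψ = vecMulVec ψ (star ⇑ψ) :=
  rfl

lemma continuous_outer_apply (i j : Fin D) :
    Continuous fun ψ : EuclideanSpace ℂ (Fin D) => outer ψ i j := by
  simp only [outer, of_apply]
  fun_prop

lemma outer_mulVec (A : Matrix (Fin D) (Fin D) ℂ) (ψ : EuclideanSpace ℂ (Fin D)) :
    outer (WithLp.toLp 2 (A *ᵥ ψ)) = A * outer ψ * Aᴴ := by
  rw [outer_eq_vecMulVec, outer_eq_vecMulVec, star_mulVec, mul_vecMulVec, vecMulVec_mul]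

lemma trace_outer (ψ : EuclideanSpace ℂ (Fin D)) : (outer ψ).trace = (‖ψ‖ : ℂ) ^ 2 := by
  rw [outer_eq_vecMulVec, trace_vecMulVec, ← EuclideanSpace.inner_eq_star_dotProduct,
    inner_self_eq_norm_sq_to_K]
  rfl

lemma mul_outer_of_mulVec_eq {A : Matrix (Fin D) (Fin D) ℂ} {ψ : EuclideanSpace ℂ (Fin D)}
    (h : A *ᵥ ψ = ψ) : A * outer ψ = outer ψ := by
  rw [outer_eq_vecMulVec, mul_vecMulVec, h]

lemma outer_mul_of_mulVec_eq {A : Matrix (Fin D) (Fin D) ℂ} (hA : A.IsHermitian)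
    {ψ : EuclideanSpace ℂ (Fin D)} (h : A *ᵥ ψ = ψ) : outer ψ * A = outer ψ := by
  rw [outer_eq_vecMulVec, vecMulVec_mul, ← hA.eq, ← star_mulVec, h]

lemma sandwich_eq_trace (B : Matrix (Fin D) (Fin D) ℂ) (ψ : EuclideanSpace ℂ (Fin D)) :
    sandwich B ψ = (outer ψ * B).trace := by
  simp only [sandwich, trace, diag_apply, mul_apply, outer, of_apply, mulVec, dotProduct,
    Finset.mul_sum]
  rw [Finset.sum_comm]
  exact Finset.sum_congr rfl fun _ _ => Finset.sum_congr rfl fun _ _ => by ring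

end Outer

section DensityMatrix

variable {D : ℕ}

def densityMatrix (u : Measure (EuclideanSpace ℂ (Fin D))) : Matrix (Fin D) (Fin D) ℂ :=
  of fun i j => ∫ ψ, outer ψ i j ∂u

variable {u : Measure (EuclideanSpace ℂ (Fin D))}

lemma integrable_mul_outer_mul_apply (hint : ∀ i j, Integrable (fun ψ => outer ψ i j) u)
    (A C : Matrix (Fin D) (Fin D) ℂ) (i j : Fin D) :
    Integrable (fun ψ => (A * outer ψ * C) i j) u := by
  simp only [mul_apply, Finset.sum_mul]
  exact integrable_finsetSum _ fun l _ => integrable_finsetSum _ fun k _ =>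
    ((hint k l).const_mul _).mul_const _

lemma integral_mul_outer_mul_apply (hint : ∀ i j, Integrable (fun ψ => outer ψ i j) u)
    (A C : Matrix (Fin D) (Fin D) ℂ) (i j : Fin D) :
    ∫ ψ, (A * outer ψ * C) i j ∂u = (A * densityMatrix u * C) i j := by
  simp only [mul_apply, Finset.sum_mul, densityMatrix, of_apply]
  rw [integral_finsetSum _ fun l _ => integrable_finsetSum _ fun k _ =>
    ((hint k l).const_mul _).mul_const _]
  refine Finset.sum_congr rfl fun l _ => ?_
  rw [integral_finsetSum _ fun k _ => ((hint k l).const_mul _).mul_const _]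
  simp only [integral_mul_const, integral_const_mul]

lemma integral_trace_outer_mul (hint : ∀ i j, Integrable (fun ψ => outer ψ i j) u)
    (K : Matrix (Fin D) (Fin D) ℂ) :
    ∫ ψ, (outer ψ * K).trace ∂u = (densityMatrix u * K).trace := by
  simp only [trace, diag_apply]
  rw [integral_finsetSum _ fun i _ => by
    simpa using integrable_mul_outer_mul_apply hint 1 K i i]
  refine Finset.sum_congr rfl fun i _ => ?_
  simpa using integral_mul_outer_mul_apply hint 1 K i i

end DensityMatrix

section UniformMeasure

variable {D : ℕ}

instance : BorelSpace (EuclideanSpace ℂ (Fin D)) := PiLp.borelSpace 2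

lemma isClosed_sphereOf (P : Matrix (Fin D) (Fin D) ℂ) : IsClosed (sphereOf P) := by
  simp only [sphereOf, Set.ofPred_and, Set.ofPred_forall]
  exact (isClosed_eq (by fun_prop) (by fun_prop)).inter
    (isClosed_iInter fun j => isClosed_eq (by fun_prop) (by fun_prop))

namespace IsUniformOn

variable {P : Matrix (Fin D) (Fin D) ℂ} {u : Measure (EuclideanSpace ℂ (Fin D))}

lemma ae_mem_sphereOf (hu : IsUniformOn P u) : ∀ᵐ ψ ∂u, ψ ∈ sphereOf P := by
  have : IsProbabilityMeasure u := hu.1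
  rw [ae_iff, ← Set.compl_def, prob_compl_eq_zero_iff (isClosed_sphereOf P).measurableSet]
  exact hu.2.1

lemma integrable_outer_apply (hu : IsUniformOn P u) (i j : Fin D) :
    Integrable (fun ψ => outer ψ i j) u := by
  have : IsProbabilityMeasure u := hu.1
  refine Integrable.mono' (integrable_const 1) (continuous_outer_apply i j).aestronglyMeasurable ?_
  filter_upwards [hu.ae_mem_sphereOf] with ψ hψ
  have hi := hψ.1 ▸ PiLp.norm_apply_le ψ i
  have hj := hψ.1 ▸ PiLp.norm_apply_le ψ j
  simpa [outer] using mul_le_one₀ hi (norm_nonneg _) hj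

lemma mul_densityMatrix (hu : IsUniformOn P u) : P * densityMatrix u = densityMatrix u := by
  ext i j
  have h := integral_mul_outer_mul_apply hu.integrable_outer_apply P 1 i j
  simp only [mul_one] at h
  rw [← h]
  refine integral_congr_ae ?_
  filter_upwards [hu.ae_mem_sphereOf] with ψ hψ
  rw [mul_outer_of_mulVec_eq (funext hψ.2)]

lemma densityMatrix_mul (hu : IsUniformOn P u) (hP : P.IsHermitian) :
    densityMatrix u * P = densityMatrix u := by
  ext i j
  have h := integral_mul_outer_mul_apply hu.integrable_outer_apply 1 P i j
  simp only [one_mul] at h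
  rw [← h]
  refine integral_congr_ae ?_
  filter_upwards [hu.ae_mem_sphereOf] with ψ hψ
  rw [outer_mul_of_mulVec_eq hP (funext hψ.2)]

lemma trace_densityMatrix (hu : IsUniformOn P u) : (densityMatrix u).trace = 1 := by
  have : IsProbabilityMeasure u := hu.1
  have h : ∀ᵐ ψ ∂u, (outer ψ * 1).trace = 1 := by
    filter_upwards [hu.ae_mem_sphereOf] with ψ hψ
    simp [trace_outer, hψ.1]
  rw [← mul_one (densityMatrix u), ← integral_trace_outer_mul hu.integrable_outer_apply,
    integral_congr_ae h]
  simp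

lemma unitary_mul_densityMatrix_mul_star (hu : IsUniformOn P u) {U : Matrix (Fin D) (Fin D) ℂ}
    (hU : U ∈ unitaryGroup (Fin D) ℂ) (hUP : U * P = P * U) :
    U * densityMatrix u * star U = densityMatrix u := by
  ext i j
  rw [star_eq_conjTranspose, ← integral_mul_outer_mul_apply hu.integrable_outer_apply]
  simp_rw [← outer_mulVec]
  conv_rhs => rw [densityMatrix, of_apply, ← hu.2.2 U hU hUP]
  rw [integral_map (by simp only [WithLp.equiv_symm_apply]; fun_prop)
    (continuous_outer_apply i j).aestronglyMeasurable]
  rfl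

lemma densityMatrix_eq (hu : IsUniformOn P u) (hP : P.IsHermitian) (hPP : P * P = P) {d : ℕ}
    (hd : P.trace = d) : densityMatrix u = (d : ℂ)⁻¹ • P := by
  obtain ⟨a, ha⟩ := exists_eq_smul_of_forall_unitary_conj_eq hP hPP hu.mul_densityMatrix
    (hu.densityMatrix_mul hP) fun U hU hUP => hu.unitary_mul_densityMatrix_mul_star hU hUP
  have had : a * d = 1 := by
    rw [← hd, ← smul_eq_mul, ← trace_smul, ← ha, hu.trace_densityMatrix]
  rw [ha, eq_inv_of_mul_eq_one_left had]

end IsUniformOn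

end UniformMeasure

section Spectral

variable {D : ℕ} {H : Matrix (Fin D) (Fin D) ℂ} (hH : H.IsHermitian)

lemma mem_eigSet (i : Fin D) : hH.eigenvalues i ∈ eigSet H hH :=
  Finset.mem_image_of_mem _ (Finset.mem_univ i)

lemma sum_smul_eigProj (g : ℝ → ℂ) :
    ∑ e ∈ eigSet H hH, g e • eigProj H hH e =
      ∑ i, g (hH.eigenvalues i) • outer (hH.eigenvectorBasis i) := by
  simp only [eigProj, Finset.smul_sum, smul_ite, smul_zero]
  rw [Finset.sum_comm]
  refine Finset.sum_congr rfl fun i _ => ?_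
  rw [Finset.sum_ite_eq, if_pos (mem_eigSet hH i)]

lemma eigenvectorUnitary_mul_diagonal_mul_star (w : Fin D → ℂ) :
    (hH.eigenvectorUnitary : Matrix (Fin D) (Fin D) ℂ) * diagonal w *
        star (hH.eigenvectorUnitary : Matrix (Fin D) (Fin D) ℂ) =
      ∑ i, w i • outer (hH.eigenvectorBasis i) := by
  ext j k
  simp [mul_apply, outer, Matrix.sum_apply, diagonal_apply, mul_comm, mul_assoc]

lemma exp_smul_eq_sum_eigProj (z : ℂ) :
    NormedSpace.exp (z • H) = ∑ e ∈ eigSet H hH, exp (z * e) • eigProj H hH e := by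
  set U := (hH.eigenvectorUnitary : Matrix (Fin D) (Fin D) ℂ)
  have hUinv : U⁻¹ = star U :=
    inv_eq_right_inv (Unitary.mul_star_self_of_mem hH.eigenvectorUnitary.2)
  have hzH : z • H = U * diagonal (fun i => z * hH.eigenvalues i) * U⁻¹ := by
    conv_lhs => rw [hH.spectral_theorem]
    rw [hUinv, Unitary.conjStarAlgAut_apply, ← Matrix.smul_mul, ← Matrix.mul_smul,
      ← diagonal_smul]
    rfl
  rw [hzH, exp_conj _ _ Unitary.isUnit_coe, exp_diagonal, hUinv,
    eigenvectorUnitary_mul_diagonal_mul_star, sum_smul_eigProj]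
  simp [Complex.exp_eq_exp_ℂ]

lemma sandwich_timeEvol (B : Matrix (Fin D) (Fin D) ℂ) (t : ℝ) (ψ : EuclideanSpace ℂ (Fin D)) :
    sandwich B (timeEvol H t ψ) =
      ∑ p ∈ eigSet H hH ×ˢ eigSet H hH, exp (I * ↑(p.1 - p.2) * t) *
        (outer ψ * eigProj H hH p.1 * B * eigProj H hH p.2).trace := by
  have hstar : (NormedSpace.exp ((-(I * t)) • H))ᴴ = NormedSpace.exp ((I * t) • H) := by
    rw [← exp_conjTranspose, conjTranspose_smul, hH.eq]
    simp
  rw [sandwich_eq_trace, timeEvol, WithLp.equiv_symm_apply, outer_mulVec, hstar,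
    Matrix.mul_assoc, Matrix.mul_assoc, trace_mul_comm, exp_smul_eq_sum_eigProj hH,
    exp_smul_eq_sum_eigProj hH, Finset.sum_product]
  simp only [Finset.mul_sum, Finset.sum_mul, Matrix.mul_smul, Matrix.smul_mul, trace_sum,
    trace_smul, smul_eq_mul, Matrix.mul_assoc]
  rw [Finset.sum_comm]
  refine Finset.sum_congr rfl fun e _ => Finset.sum_congr rfl fun f _ => ?_
  rw [← mul_assoc, ← Complex.exp_add]
  congr 2
  push_cast
  ring

lemma MpsiB_eq_trace (ψ : EuclideanSpace ℂ (Fin D)) (B : Matrix (Fin D) (Fin D) ℂ) :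
    MpsiB H hH ψ B =
      (outer ψ * ∑ e ∈ eigSet H hH, eigProj H hH e * B * eigProj H hH e).trace := by
  simp [MpsiB, Finset.mul_sum, trace_sum, Matrix.mul_assoc]

lemma MmuB_eq_trace (P B : Matrix (Fin D) (Fin D) ℂ) (d : ℕ) :
    MmuB H hH P B d =
      (d : ℂ)⁻¹ * (P * ∑ e ∈ eigSet H hH, eigProj H hH e * B * eigProj H hH e).trace := by
  simp [MmuB, Finset.mul_sum, trace_sum, Matrix.mul_assoc]

end Spectral

section TimeAverage

lemma tendsto_average_exp_mul_I (ω : ℝ) :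
    Tendsto (fun T : ℝ => (T : ℂ)⁻¹ * ∫ t in Set.Ioc 0 T, exp (I * ω * t)) atTop
      (𝓝 (if ω = 0 then 1 else 0)) := by
  split_ifs with hω
  · refine tendsto_const_nhds.congr' ?_
    filter_upwards [eventually_gt_atTop 0] with T hT
    simp [hω, Real.volume_real_Ioc_of_le hT.le, hT.ne']
  have hc : I * ω ≠ 0 := by simp [hω]
  have hbound : ∀ T : ℝ, ‖exp (I * ω * T) - exp (I * ω * 0)‖ ≤ 2 := fun T => by
    refine (norm_sub_le _ _).trans ?_
    norm_num [norm_exp]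
  refine squeeze_zero_norm' (a := fun T : ℝ => 2 / ‖I * ω‖ * T⁻¹) ?_ ?_
  · filter_upwards [eventually_gt_atTop 0] with T hT
    rw [← intervalIntegral.integral_of_le hT.le, integral_exp_mul_complex hc, norm_mul, norm_div,
      norm_inv, norm_real, Real.norm_of_nonneg hT.le, mul_comm, div_eq_mul_inv, div_eq_mul_inv]
    gcongr
    exact hbound T
  · simpa using tendsto_inv_atTop_zero.const_mul (2 / ‖I * ω‖)

lemma tendsto_average_sum_exp_mul_I {α : Type*} (s : Finset α) (ω : α → ℝ) (c : α → ℂ) :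
    Tendsto (fun T : ℝ => (T : ℂ)⁻¹ * ∫ t in Set.Ioc 0 T, ∑ a ∈ s, exp (I * ω a * t) * c a)
      atTop (𝓝 (∑ a ∈ s with ω a = 0, c a)) := by
  have hsum : ∀ T : ℝ, (T : ℂ)⁻¹ * ∫ t in Set.Ioc 0 T, ∑ a ∈ s, exp (I * ω a * t) * c a =
      ∑ a ∈ s, ((T : ℂ)⁻¹ * ∫ t in Set.Ioc 0 T, exp (I * ω a * t)) * c a := fun T => by
    rw [integral_finsetSum _ fun a _ => (by fun_prop : Continuous _).integrableOn_Ioc,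
      Finset.mul_sum]
    simp_rw [integral_mul_const, mul_assoc]
  simp_rw [hsum, Finset.sum_filter]
  refine tendsto_finsetSum _ fun a _ => ?_
  simpa [ite_mul] using (tendsto_average_exp_mul_I (ω a)).mul_const (c a)

end TimeAverage

section Dynamics

variable {D : ℕ} {H : Matrix (Fin D) (Fin D) ℂ} (hH : H.IsHermitian)

lemma tendsto_average_sandwich_timeEvol (B : Matrix (Fin D) (Fin D) ℂ)
    (ψ : EuclideanSpace ℂ (Fin D)) :
    Tendsto (fun T : ℝ => (T : ℂ)⁻¹ * ∫ t in Set.Ioc 0 T, sandwich B (timeEvol H t ψ)) atTop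
      (𝓝 (MpsiB H hH ψ B)) := by
  simp_rw [sandwich_timeEvol hH]
  convert tendsto_average_sum_exp_mul_I _ (fun p : ℝ × ℝ => p.1 - p.2) _ using 2
  rw [MpsiB, Finset.sum_filter, Finset.sum_product]
  refine Finset.sum_congr rfl fun e he => ?_
  simp [sub_eq_zero, he]

lemma integral_MpsiB_eq_MmuB {P : Matrix (Fin D) (Fin D) ℂ} (hP : P.IsHermitian)
    (hPP : P * P = P) {d : ℕ} (hd : P.trace = d) {u : Measure (EuclideanSpace ℂ (Fin D))}
    (hu : IsUniformOn P u) (B : Matrix (Fin D) (Fin D) ℂ) :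
    ∫ ψ, MpsiB H hH ψ B ∂u = MmuB H hH P B d := by
  simp_rw [MpsiB_eq_trace hH]
  rw [integral_trace_outer_mul hu.integrable_outer_apply, hu.densityMatrix_eq hP hPP hd,
    Matrix.smul_mul, trace_smul, smul_eq_mul, MmuB_eq_trace hH]

end Dynamics

end GNT

open GNT in
/-- The time average of `t ↦ ⟨ψ_t|B|ψ_t⟩` exists and equals `M_{ψ₀B}`, and `M_{μB}` is the
average of `M_{ψ₀B}` over the uniform measure on the unit sphere of `ℋ_μ`. -/
theorem stmt2 {D : ℕ} {ι : Type} [Fintype ι]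
    (P : ι → Matrix (Fin D) (Fin D) ℂ) (d : ι → ℕ) (hdecomp : IsOrthDecomp P d)
    (H : Matrix (Fin D) (Fin D) ℂ) (hH : H.IsHermitian)
    (B : Matrix (Fin D) (Fin D) ℂ)
    (μ : ι) (u : Measure (EuclideanSpace ℂ (Fin D))) (hu : IsUniformOn (P μ) u) :
    (∀ ψ₀ : EuclideanSpace ℂ (Fin D), ‖ψ₀‖ = 1 →
      Filter.Tendsto
        (fun T : ℝ => (T : ℂ)⁻¹ * ∫ t in Set.Ioc (0:ℝ) T, sandwich B (timeEvol H t ψ₀))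
        Filter.atTop (nhds (MpsiB H hH ψ₀ B))) ∧
    ∫ ψ₀, MpsiB H hH ψ₀ B ∂u = MmuB H hH (P μ) B (d μ) := by
  obtain ⟨hherm, hidem, -, -, htrace⟩ := hdecomp
  exact ⟨fun ψ₀ _ => tendsto_average_sandwich_timeEvol hH B ψ₀,
    integral_MpsiB_eq_MmuB hH (hherm μ) (hidem μ) (htrace μ) hu B⟩
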